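/- Let p > q ≥ 2 be coprime integers. If for every nonempty u ∈ L_{p/q} the letter 0 occurs in the infinite word wmin_{p/q}(u), then there exist no nonempty u ∈ L_{p/q} and u′ ∈ L_{p/q} with wmin_{p/q}(u) = wmax_{p/q}(u′); that is, no infinite word is simultaneously a minimal word (with nonempty seed) and a maximal word. -/
import Mathlib


/-- The valuation in base `p/q` of a digit word (most significant digit first):
`val_{p/q}(a_k ⋯ a_0) = (1/q) ∑ a_i (p/q)^i`, with `val(ε) = 0`. -/
def ratVal (p q : ℕ) (w : List ℕ) : ℚ :=
  w.foldl (fun x a => (p : ℚ) / q * x + (a : ℚ) / q) 0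

/-- Membership in the language `L_{p/q}`: all letters lie in `{0,…,p-1}`, the valuation
is a nonnegative integer, and the word is empty or has nonzero leading digit. -/
def InLang (p q : ℕ) (w : List ℕ) : Prop :=
  (∀ a ∈ w, a < p) ∧ (∃ n : ℕ, ratVal p q w = n) ∧ w.head? ≠ some 0

/-- `v` is the lexicographically least word of length `l` over `{0,…,p-1}`
such that `u ++ v ∈ L_{p/q}`. -/
def IsWmin (p q : ℕ) (u : List ℕ) (l : ℕ) (v : List ℕ) : Prop :=
  v.length = l ∧ InLang p q (u ++ v) ∧
    ∀ v' : List ℕ, v'.length = l → InLang p q (u ++ v') →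
      ¬ List.Lex (· < · : ℕ → ℕ → Prop) v' v

/-- `v` is the lexicographically greatest word of length `l` over `{0,…,p-1}`
such that `u ++ v ∈ L_{p/q}`. -/
def IsWmax (p q : ℕ) (u : List ℕ) (l : ℕ) (v : List ℕ) : Prop :=
  v.length = l ∧ InLang p q (u ++ v) ∧
    ∀ v' : List ℕ, v'.length = l → InLang p q (u ++ v') →
      ¬ List.Lex (· < · : ℕ → ℕ → Prop) v v'

/-- `w : ℕ → ℕ` is the infinite minimal word with seed `u`: its prefix of length `l`
is `wmin_{p/q}(u,l)` for every `l`. -/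
def IsWminInf (p q : ℕ) (u : List ℕ) (w : ℕ → ℕ) : Prop :=
  ∀ l : ℕ, IsWmin p q u l ((List.range l).map w)

/-- `w : ℕ → ℕ` is the infinite maximal word with seed `u`: its prefix of length `l`
is `wmax_{p/q}(u,l)` for every `l`. -/
def IsWmaxInf (p q : ℕ) (u : List ℕ) (w : ℕ → ℕ) : Prop :=
  ∀ l : ℕ, IsWmax p q u l ((List.range l).map w)


lemma lex_snoc_lt {s : List ℕ} {a b : ℕ} (h : a < b) :
    List.Lex (· < · : ℕ → ℕ → Prop) (s ++ [a]) (s ++ [b]) := by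
  induction s with
  | nil => exact List.Lex.rel h
  | cons c t ih => exact List.Lex.cons ih

lemma ratVal_snoc (p q : ℕ) (A : List ℕ) (a : ℕ) :
    ratVal p q (A ++ [a]) = (p : ℚ) / q * ratVal p q A + (a : ℚ) / q := by
  simp [ratVal, List.foldl_append]

/-- For coprime `p > q ≥ 2`: if the letter `0` occurs in every infinite minimal word
`wmin_{p/q}(u)` (`u ∈ L_{p/q}` nonempty), then no infinite word is simultaneously a minimal
word (with nonempty seed) and a maximal word. -/
theorem stmt17 (p q : ℕ) (hq : 2 ≤ q) (hpq : q < p) (hco : Nat.Coprime p q)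
    (hzero : ∀ (u : List ℕ) (w : ℕ → ℕ), InLang p q u → u ≠ [] → IsWminInf p q u w →
      ∃ n : ℕ, w n = 0) :
    ¬ ∃ (u u' : List ℕ) (w : ℕ → ℕ), InLang p q u ∧ u ≠ [] ∧ InLang p q u' ∧
      IsWminInf p q u w ∧ IsWmaxInf p q u' w := by
  rintro ⟨u, u', w, hu, hune, hu', hmin, hmax⟩
  obtain ⟨n, hn⟩ := hzero u w hu hune hmin
  obtain ⟨hlen, hmem, hmaxl⟩ := hmax (n + 1)
  set s : List ℕ := (List.range n).map w with hs
  have hpre : (List.range (n + 1)).map w = s ++ [0] := by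
    rw [List.range_succ, List.map_append]; simp [hn, hs]
  rw [hpre] at hmem hmaxl
  rw [← List.append_assoc] at hmem
  obtain ⟨hdig, ⟨N, hval⟩, hhead⟩ := hmem
  have hqQ : (q : ℚ) ≠ 0 := by positivity
  have hA : u' ++ s ≠ [] := by
    intro h
    rw [h] at hhead
    simp at hhead
  have hval0 : (p : ℚ) / q * ratVal p q (u' ++ s) = N := by
    have := ratVal_snoc p q (u' ++ s) 0
    rw [hval] at this
    simpa using this.symm
  have hval' : ratVal p q ((u' ++ s) ++ [q]) = ((N + 1 : ℕ) : ℚ) := by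
    rw [ratVal_snoc, hval0, div_self hqQ]
    push_cast; ring
  refine hmaxl (s ++ [q]) ?_ ?_ (lex_snoc_lt (by omega))
  · simp [hs]
  · rw [← List.append_assoc]
    refine ⟨?_, ⟨N + 1, hval'⟩, ?_⟩
    · intro a ha
      rcases List.mem_append.mp ha with h | h
      · exact hdig a (List.mem_append.mpr (Or.inl h))
      · simp at h; omega
    · obtain ⟨c, t, hct⟩ := List.exists_cons_of_ne_nil hA
      rw [hct] at hhead ⊢
      simpa using hhead
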